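/- Let λ > 0, μ ∈ ℂ, |1−μ| < λ, a = (1−μ)/λ, and let f be analytic on 𝔻 with f(0)=0, f'(0)=1, f(z)≠0 for z≠0, satisfying |(z/f(z))²f'(z) − μ| < λ on 𝔻. Then there exist c ∈ ℂ and an analytic ω on 𝔻 with |ω| ≤ 1 such that z/f(z) = 1 + cz − λz·∫₀^z (1−|a|²)ω(t)/(1 + conj(a)·t²·ω(t)) dt for all z ∈ 𝔻. -/

import Mathlib

/-!
Extend `g(z) = z / f(z)` holomorphically by `g(0) = 1`. The hypothesis says that
`Ω = (g - z g' - μ) / λ` maps the disk into itself; moreover `Ω(0) = a` and `Ω'(0) = 0`.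
Composing with the disk automorphism `w ↦ (w - a) / (1 - ā w)` gives a self-map of the disk
vanishing to second order at `0`, so the Schwarz lemma applied twice writes it as `z² ω` with
`|ω| ≤ 1`; solving back, `(Ω - a) / z² = (1 - |a|²) ω / (1 + ā z² ω)`. Finally the derivative of
`(g(z) - 1) / z` is `-λ (Ω - a) / z²`, and integrating it along `[0, z]` gives the formula with
`c = g'(0)`.
-/

open Metric Complex

/-- Integral of `F` along the segment from `0` to `z`. -/
noncomputable def segInt (F : ℂ → ℂ) (z : ℂ) : ℂ :=
  ∫ t in (0:ℝ)..1, z * F ((t : ℂ) * z)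

open Set ComplexConjugate

lemma deriv_dslope_of_ne {𝕜 : Type*} [NontriviallyNormedField 𝕜] {g : 𝕜 → 𝕜} {c w : 𝕜}
    (hg : DifferentiableAt 𝕜 g w) (hw : w ≠ c) :
    deriv (dslope g c) w = ((w - c) * deriv g w - (g w - g c)) / (w - c) ^ 2 := by
  have hslope : slope g c = fun u => (g u - g c) / (u - c) :=
    funext fun u => slope_def_field g c u
  have hquot : HasDerivAt (fun u => (g u - g c) / (u - c))
      ((deriv g w * (w - c) - (g w - g c) * 1) / (w - c) ^ 2) w :=
    (hg.hasDerivAt.sub_const (g c)).div ((hasDerivAt_id' w).sub_const c) (sub_ne_zero.2 hw)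
  rw [(dslope_eventuallyEq_slope_of_ne g hw).deriv_eq, hslope, hquot.deriv]
  ring

lemma hasDerivAt_sub_mul_deriv_zero {𝕜 : Type*} [NontriviallyNormedField 𝕜] {g : 𝕜 → 𝕜}
    (hg : DifferentiableAt 𝕜 g 0) (hg' : DifferentiableAt 𝕜 (deriv g) 0) :
    HasDerivAt (fun z => g z - z * deriv g z) 0 0 := by
  have h : HasDerivAt (fun z => g z - z * deriv g z)
      (deriv g 0 - (1 * deriv g 0 + 0 * deriv (deriv g) 0)) 0 :=
    hg.hasDerivAt.sub ((hasDerivAt_id' 0).mul hg'.hasDerivAt)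
  simpa using h

lemma eq_sq_mul_dslope_dslope {𝕜 : Type*} [NontriviallyNormedField 𝕜] {Φ : 𝕜 → 𝕜}
    (h0 : Φ 0 = 0) (h0' : deriv Φ 0 = 0) (z : 𝕜) :
    Φ z = z ^ 2 * dslope (dslope Φ 0) 0 z := by
  have h1 := sub_smul_dslope Φ 0 z
  have h2 := sub_smul_dslope (dslope Φ 0) 0 z
  rw [dslope_same, h0'] at h2
  simp only [sub_zero, smul_eq_mul, h0] at h1 h2
  linear_combination -h1 - z * h2

lemma norm_dslope_dslope_le_one {Φ : ℂ → ℂ} (hd : DifferentiableOn ℂ Φ (ball 0 1))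
    (hmaps : MapsTo Φ (ball 0 1) (ball 0 1)) (h0 : Φ 0 = 0) (h0' : deriv Φ 0 = 0) {z : ℂ}
    (hz : z ∈ ball (0 : ℂ) 1) : ‖dslope (dslope Φ 0) 0 z‖ ≤ 1 := by
  have hd' : DifferentiableOn ℂ (dslope Φ 0) (ball 0 1) :=
    (differentiableOn_dslope (ball_mem_nhds _ one_pos)).2 hd
  have hmaps' : MapsTo (dslope Φ 0) (ball 0 1) (closedBall (dslope Φ 0 0) 1) := by
    intro w hw
    rw [dslope_same, h0', mem_closedBall_zero_iff]
    have hmaps₀ : MapsTo Φ (ball 0 1) (closedBall (Φ 0) 1) := by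
      rw [h0]
      exact hmaps.mono_right ball_subset_closedBall
    simpa using norm_dslope_le_div_of_mapsTo_ball hd hmaps₀ hw
  simpa using norm_dslope_le_div_of_mapsTo_ball hd' hmaps' hz

lemma one_sub_conj_mul_ne_zero {a w : ℂ} (ha : ‖a‖ < 1) (hw : ‖w‖ ≤ 1) :
    1 - conj a * w ≠ 0 := by
  have hlt : ‖conj a * w‖ < 1 := by
    rw [norm_mul, RCLike.norm_conj]
    nlinarith [norm_nonneg a, norm_nonneg w]
  intro h
  rw [← sub_eq_zero.1 h, norm_one] at hlt
  exact hlt.false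

lemma norm_mobius_lt_one {a w : ℂ} (ha : ‖a‖ < 1) (hw : ‖w‖ < 1) :
    ‖(w - a) / (1 - conj a * w)‖ < 1 := by
  have hden := one_sub_conj_mul_ne_zero ha hw.le
  have key : ‖w - a‖ ^ 2 < ‖1 - conj a * w‖ ^ 2 := by
    have hid : ‖1 - conj a * w‖ ^ 2 - ‖w - a‖ ^ 2 = (1 - ‖a‖ ^ 2) * (1 - ‖w‖ ^ 2) := by
      apply ofReal_injective
      push_cast
      simp only [← mul_conj', map_sub, map_mul, map_one, conj_conj]
      ring
    nlinarith [mul_pos (sub_pos.2 (pow_lt_one₀ (norm_nonneg a) ha two_ne_zero))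
      (sub_pos.2 (pow_lt_one₀ (norm_nonneg w) hw two_ne_zero))]
  rw [norm_div, div_lt_one (norm_pos_iff.2 hden)]
  exact lt_of_pow_lt_pow_left₀ 2 (norm_nonneg _) key

lemma sub_eq_of_mobius_eq {a w v : ℂ} (ha : ‖a‖ < 1) (hden : 1 - conj a * w ≠ 0)
    (hv : (w - a) / (1 - conj a * w) = v) :
    w - a = (1 - ‖a‖ ^ 2 : ℝ) * v / (1 + conj a * v) := by
  have hv' : w - a = v * (1 - conj a * w) := by rw [← hv, div_mul_cancel₀ _ hden]
  have hprod : (1 + conj a * v) * (1 - conj a * w) = ((1 - ‖a‖ ^ 2 : ℝ) : ℂ) := by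
    push_cast
    linear_combination (-conj a) * hv' - conj_mul' a
  have hnum : ((1 - ‖a‖ ^ 2 : ℝ) : ℂ) ≠ 0 :=
    ofReal_ne_zero.2 (sub_pos.2 (pow_lt_one₀ (norm_nonneg a) ha two_ne_zero)).ne'
  have hv0 : 1 + conj a * v ≠ 0 := left_ne_zero_of_mul (hprod ▸ hnum)
  rw [eq_div_iff hv0, hv', ← hprod]
  ring

theorem exists_sub_eq_of_deriv_eq_zero {Ω : ℂ → ℂ} (hd : DifferentiableOn ℂ Ω (ball 0 1))
    (hmaps : MapsTo Ω (ball 0 1) (ball 0 1)) (h0' : deriv Ω 0 = 0) :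
    ∃ ω : ℂ → ℂ, DifferentiableOn ℂ ω (ball 0 1) ∧ (∀ z ∈ ball (0 : ℂ) 1, ‖ω z‖ ≤ 1) ∧
      ∀ z ∈ ball (0 : ℂ) 1,
        Ω z - Ω 0 = (1 - ‖Ω 0‖ ^ 2 : ℝ) * (z ^ 2 * ω z) / (1 + conj (Ω 0) * (z ^ 2 * ω z)) := by
  set a := Ω 0
  have h0 : (0 : ℂ) ∈ ball (0 : ℂ) 1 := mem_ball_self one_pos
  have h0n : ball (0 : ℂ) 1 ∈ nhds 0 := ball_mem_nhds _ one_pos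
  have ha : ‖a‖ < 1 := mem_ball_zero_iff.1 (hmaps h0)
  have hden : ∀ z ∈ ball (0 : ℂ) 1, 1 - conj a * Ω z ≠ 0 :=
    fun z hz => one_sub_conj_mul_ne_zero ha (mem_ball_zero_iff.1 (hmaps hz)).le
  set Φ : ℂ → ℂ := fun z => (Ω z - a) / (1 - conj a * Ω z)
  have hΦd : DifferentiableOn ℂ Φ (ball 0 1) :=
    (hd.sub_const a).div ((hd.const_mul _).const_sub 1) hden
  have hΦmaps : MapsTo Φ (ball 0 1) (ball 0 1) := fun z hz =>
    mem_ball_zero_iff.2 (norm_mobius_lt_one ha (mem_ball_zero_iff.1 (hmaps hz)))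
  have hΦ0 : Φ 0 = 0 := by simp [Φ, a]
  have hΦ' : deriv Φ 0 = 0 := by
    have hΩ : HasDerivAt Ω (deriv Ω 0) 0 :=
      (hd.differentiableAt h0n).hasDerivAt
    rw [h0'] at hΩ
    have hΦ : HasDerivAt Φ _ 0 :=
      (hΩ.sub_const a).div ((hΩ.const_mul (conj a)).const_sub 1) (hden 0 h0)
    simpa using hΦ.deriv
  refine ⟨dslope (dslope Φ 0) 0,
    (differentiableOn_dslope h0n).2 ((differentiableOn_dslope h0n).2 hΦd),
    fun z hz => norm_dslope_dslope_le_one hΦd hΦmaps hΦ0 hΦ' hz,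
    fun z hz => sub_eq_of_mobius_eq ha (hden z hz) ?_⟩
  exact eq_sq_mul_dslope_dslope hΦ0 hΦ' z

lemma ofReal_mul_mem_ball {t : ℝ} (ht : t ∈ Icc (0 : ℝ) 1) {z : ℂ} {r : ℝ}
    (hz : z ∈ ball (0 : ℂ) r) : (t : ℂ) * z ∈ ball (0 : ℂ) r := by
  simpa [real_smul] using
    (convex_ball (0 : ℂ) r).smul_mem_of_zero_mem (mem_ball_self (pos_of_mem_ball hz)) hz ht

lemma segInt_const_mul (c : ℂ) (F : ℂ → ℂ) (z : ℂ) :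
    segInt (fun t => c * F t) z = c * segInt F z := by
  simp only [segInt, ← intervalIntegral.integral_const_mul, mul_left_comm]

lemma segInt_congr {F₁ F₂ : ℂ → ℂ} {r : ℝ} {z : ℂ} (hz : z ∈ ball (0 : ℂ) r)
    (h : ∀ w ∈ ball (0 : ℂ) r, w ≠ 0 → F₁ w = F₂ w) : segInt F₁ z = segInt F₂ z := by
  rcases eq_or_ne z 0 with rfl | hz0
  · simp [segInt]
  refine intervalIntegral.integral_congr_ae (MeasureTheory.ae_of_all _ fun t ht => ?_)
  rw [uIoc_of_le zero_le_one] at ht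
  rw [h _ (ofReal_mul_mem_ball ⟨ht.1.le, ht.2⟩ hz)
    (mul_ne_zero (ofReal_ne_zero.2 ht.1.ne') hz0)]

lemma segInt_deriv {G : ℂ → ℂ} {r : ℝ} (hG : DifferentiableOn ℂ G (ball 0 r)) {z : ℂ}
    (hz : z ∈ ball (0 : ℂ) r) : segInt (deriv G) z = G z - G 0 := by
  have hmem : ∀ t ∈ uIcc (0 : ℝ) 1, (t : ℂ) * z ∈ ball (0 : ℂ) r := fun t ht =>
    ofReal_mul_mem_ball (by rwa [uIcc_of_le zero_le_one] at ht) hz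
  have hderiv : ∀ t ∈ uIcc (0 : ℝ) 1,
      HasDerivAt (fun s : ℝ => G (s * z)) (z * deriv G (t * z)) t := by
    intro t ht
    have hGt := (hG.differentiableAt (isOpen_ball.mem_nhds (hmem t ht))).hasDerivAt
    simpa [mul_comm] using (hGt.comp (t : ℂ) (hasDerivAt_mul_const z)).comp_ofReal
  have hcont : ContinuousOn (fun t : ℝ => z * deriv G (t * z)) (uIcc 0 1) :=
    continuousOn_const.mul <| (hG.deriv isOpen_ball).continuousOn.comp
      (by fun_prop : Continuous fun t : ℝ => (t : ℂ) * z).continuousOn hmem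
  rw [segInt, intervalIntegral.integral_eq_sub_of_hasDerivAt hderiv hcont.intervalIntegrable]
  simp

lemma eq_add_mul_segInt {g h : ℂ → ℂ} {r : ℝ} (hg : DifferentiableOn ℂ g (ball 0 r))
    (hh : ∀ w ∈ ball (0 : ℂ) r, w ≠ 0 → w * deriv g w - (g w - g 0) = w ^ 2 * h w) {z : ℂ}
    (hz : z ∈ ball (0 : ℂ) r) : g z = g 0 + deriv g 0 * z + z * segInt h z := by
  rcases eq_or_ne z 0 with rfl | hz0
  · simp [segInt]
  have hderiv : ∀ w ∈ ball (0 : ℂ) r, w ≠ 0 → deriv (dslope g 0) w = h w := by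
    intro w hw hw0
    rw [deriv_dslope_of_ne (hg.differentiableAt (isOpen_ball.mem_nhds hw)) hw0, sub_zero,
      hh w hw hw0]
    field_simp
  have hG := segInt_deriv
    ((differentiableOn_dslope (isOpen_ball.mem_nhds (mem_ball_self (pos_of_mem_ball hz)))).2 hg) hz
  rw [segInt_congr hz hderiv, dslope_same, dslope_of_ne _ hz0, slope_def_field, sub_zero] at hG
  rw [hG]
  field_simp
  ring

section InvDslope

variable {f : ℂ → ℂ}

lemma dslope_zero_apply_of_ne (hf0 : f 0 = 0) {z : ℂ} (hz : z ≠ 0) : dslope f 0 z = f z / z := by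
  rw [dslope_of_ne _ hz, slope_def_field, hf0, sub_zero, sub_zero]

lemma inv_dslope_apply_of_ne (hf0 : f 0 = 0) {z : ℂ} (hz : z ≠ 0) :
    (dslope f 0)⁻¹ z = z / f z := by
  rw [Pi.inv_apply, dslope_zero_apply_of_ne hf0 hz, inv_div]

lemma differentiableOn_inv_dslope {s : Set ℂ} (hs : s ∈ nhds 0) (hd : DifferentiableOn ℂ f s)
    (hf0 : f 0 = 0) (hf1 : deriv f 0 ≠ 0) (hfne : ∀ z ∈ s, z ≠ 0 → f z ≠ 0) :
    DifferentiableOn ℂ (dslope f 0)⁻¹ s := by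
  refine ((differentiableOn_dslope hs).2 hd).inv fun z hz => ?_
  rcases eq_or_ne z 0 with rfl | hz0
  · rwa [dslope_same]
  · rw [dslope_zero_apply_of_ne hf0 hz0]
    exact div_ne_zero (hfne z hz hz0) hz0

lemma inv_dslope_sub_mul_deriv (hf0 : f 0 = 0) {z : ℂ} (hf : DifferentiableAt ℂ f z)
    (hz : z ≠ 0) (hfz : f z ≠ 0) :
    (dslope f 0)⁻¹ z - z * deriv (dslope f 0)⁻¹ z = (z / f z) ^ 2 * deriv f z := by
  have hF := dslope_zero_apply_of_ne hf0 hz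
  have hinv := ((differentiableAt_dslope_of_ne hz).2 hf).hasDerivAt.inv
    (by rw [hF]; exact div_ne_zero hfz hz)
  rw [hinv.deriv, Pi.inv_apply, deriv_dslope_of_ne hf hz, hF, hf0]
  field_simp
  ring

end InvDslope

theorem exists_eq_segInt_of_norm_sub_mul_deriv_lt {g : ℂ → ℂ} {lam : ℝ} {μ a : ℂ}
    (hg : DifferentiableOn ℂ g (ball 0 1)) (hg0 : g 0 = 1) (hlam : 0 < lam)
    (ha : a = (1 - μ) / lam) (hlt : ∀ z ∈ ball (0 : ℂ) 1, ‖g z - z * deriv g z - μ‖ < lam) :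
    ∃ ω : ℂ → ℂ, DifferentiableOn ℂ ω (ball 0 1) ∧ (∀ z ∈ ball (0 : ℂ) 1, ‖ω z‖ ≤ 1) ∧
      ∀ z ∈ ball (0 : ℂ) 1, g z = 1 + deriv g 0 * z - lam * z *
        segInt (fun t => ((1 - ‖a‖ ^ 2 : ℝ) : ℂ) * ω t / (1 + conj a * t ^ 2 * ω t)) z := by
  have h0 : ball (0 : ℂ) 1 ∈ nhds 0 := ball_mem_nhds _ one_pos
  have hg' : DifferentiableOn ℂ (deriv g) (ball 0 1) := hg.deriv isOpen_ball
  set Ω : ℂ → ℂ := fun z => (g z - z * deriv g z - μ) / lam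
  have hΩ0 : Ω 0 = a := by simp [Ω, hg0, ha]
  have hΩmaps : MapsTo Ω (ball 0 1) (ball 0 1) := fun z hz => by
    rw [mem_ball_zero_iff, norm_div, norm_real, Real.norm_of_nonneg hlam.le, div_lt_one hlam]
    exact hlt z hz
  have hΩ' : deriv Ω 0 = 0 := by
    have hΩ : HasDerivAt Ω ((0 : ℂ) / lam) 0 :=
      ((hasDerivAt_sub_mul_deriv_zero (hg.differentiableAt h0)
        (hg'.differentiableAt h0)).sub_const μ).div_const _
    rw [hΩ.deriv, zero_div]
  obtain ⟨ω, hωd, hω1, hΩω⟩ := exists_sub_eq_of_deriv_eq_zero (Ω := Ω)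
    ((hg.sub (differentiableOn_id.mul hg')).sub_const μ |>.div_const _) hΩmaps hΩ'
  rw [hΩ0] at hΩω
  set F : ℂ → ℂ := fun t => ((1 - ‖a‖ ^ 2 : ℝ) : ℂ) * ω t / (1 + conj a * t ^ 2 * ω t)
  have hODE : ∀ w ∈ ball (0 : ℂ) 1, w ≠ 0 →
      w * deriv g w - (g w - g 0) = w ^ 2 * (-lam * F w) := by
    intro w hw _
    have hF : w ^ 2 * F w = Ω w - a := by
      rw [hΩω w hw]
      ring
    have hlam0 : (lam : ℂ) ≠ 0 := ofReal_ne_zero.2 hlam.ne'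
    rw [mul_left_comm, hF]
    simp only [Ω, hg0, ha]
    field_simp
    ring
  refine ⟨ω, hωd, hω1, fun z hz => ?_⟩
  rw [eq_add_mul_segInt hg hODE hz, hg0, segInt_const_mul]
  ring

theorem stmt_17 (lam : ℝ) (μ a : ℂ) (f : ℂ → ℂ)
    (hlam : 0 < lam) (hμ : ‖1 - μ‖ < lam) (ha : a = (1 - μ) / lam)
    (hdiff : DifferentiableOn ℂ f (ball (0:ℂ) 1))
    (hf0 : f 0 = 0) (hf1 : deriv f 0 = 1)
    (hfne : ∀ z ∈ ball (0:ℂ) 1, z ≠ 0 → f z ≠ 0)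
    (hU : ∀ z ∈ ball (0:ℂ) 1, z ≠ 0 → ‖(z / f z) ^ 2 * deriv f z - μ‖ < lam) :
    ∃ c : ℂ, ∃ ω : ℂ → ℂ, DifferentiableOn ℂ ω (ball (0:ℂ) 1) ∧
      (∀ z ∈ ball (0:ℂ) 1, ‖ω z‖ ≤ 1) ∧
      ∀ z ∈ ball (0:ℂ) 1, z ≠ 0 →
        z / f z = 1 + c * z - (lam : ℂ) * z *
          segInt (fun t => ((1 - ‖a‖ ^ 2 : ℝ) : ℂ) * ω t /
            (1 + (starRingEnd ℂ a) * t ^ 2 * ω t)) z := by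
  have hg := differentiableOn_inv_dslope (ball_mem_nhds _ one_pos) hdiff hf0
    (hf1 ▸ one_ne_zero) hfne
  have hg0 : (dslope f 0)⁻¹ 0 = 1 := by simp [hf1]
  obtain ⟨ω, hωd, hω1, hrepr⟩ :=
    exists_eq_segInt_of_norm_sub_mul_deriv_lt hg hg0 hlam ha fun z hz => by
      rcases eq_or_ne z 0 with rfl | hz0
      · simpa [hg0] using hμ
      · rw [inv_dslope_sub_mul_deriv hf0 (hdiff.differentiableAt (isOpen_ball.mem_nhds hz)) hz0
          (hfne z hz hz0)]
        exact hU z hz hz0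
  refine ⟨deriv (dslope f 0)⁻¹ 0, ω, hωd, hω1, fun z hz hz0 => ?_⟩
  rw [← inv_dslope_apply_of_ne hf0 hz0]
  exact hrepr z hz
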